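/- Let M be a positive integer, fix q ∈ (1, M+1], and denote by (α_i) the quasi-greedy expansion of 1 in base q. The map x ↦ (a_i), where (a_i) denotes the quasi-greedy expansion of x, is a strictly increasing one-to-one correspondence between the interval (0, M/(q−1)] and the set of infinite sequences (a_i) with digits in {0,...,M} satisfying a_{n+1}a_{n+2}... ≤ α_1α_2... (lexicographically) whenever a_n < M. -/

import Mathlib

/-!
The quasi-greedy partial sums `s_n` stay strictly below `x`, and since `q ≤ M + 1` the remainder
`x - s_n` is at most `(M / (q - 1)) / q ^ n`; so the expansion converges to `x`, has infinitely
many nonzero digits, and `x ↦ (a_i)` is strictly increasing for the lexicographic order, because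
the first digit where two expansions differ is monotone in `x`. After a digit `a_n < M` the tail
has value at most `1`, and the quasi-greedy expansion of `1` dominates every infinite expansion
of value at most `1`: this gives the lexicographic condition. Conversely, for an admissible
sequence, comparing each tail with `(α_i)` at their first difference bounds its value by `1` up to
an error that shrinks by a factor `q` at each iteration. Hence the tails after digits `< M` have
value at most `1`, which is exactly the maximality characterizing the quasi-greedy digits of the
value of the sequence.
-/

/-- Strict lexicographic order on digit sequences (indexed from 0). -/
def LexLt (a b : ℕ → ℕ) : Prop :=
  ∃ n, (∀ k, k < n → a k = b k) ∧ a n < b n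

/-- Non-strict lexicographic order on digit sequences. -/
def LexLe (a b : ℕ → ℕ) : Prop :=
  LexLt a b ∨ a = b

open Classical in
/-- The next quasi-greedy digit: the largest integer `m ≤ M` with `s + m / q ^ (n+1) < x`,
where `s` is the value of the previously chosen digits. -/
noncomputable def qgDigit (M : ℕ) (q x s : ℝ) (n : ℕ) : ℕ :=
  Nat.findGreatest (fun m => s + (m : ℝ) / q ^ (n + 1) < x) M

/-- Partial sums of the quasi-greedy expansion of `x` in base `q` with digits `≤ M`. -/
noncomputable def qgSum (M : ℕ) (q x : ℝ) : ℕ → ℝ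
  | 0 => 0
  | n + 1 => qgSum M q x n + (qgDigit M q x (qgSum M q x n) n : ℝ) / q ^ (n + 1)

/-- `quasiGreedy M q x n` is the `(n+1)`-st digit (so indexing starts at 0) of the
quasi-greedy expansion of `x` in base `q` with digits in `{0, ..., M}`:
recursively, it is the largest integer `a_n ≤ M` with `a_1/q + ⋯ + a_n/q^n < x`. -/
noncomputable def quasiGreedy (M : ℕ) (q x : ℝ) (n : ℕ) : ℕ :=
  qgDigit M q x (qgSum M q x n) n

open Filter Topology Finset

section LexOrder

variable {a b : ℕ → ℕ}

theorem exists_forall_lt_eq_and_ne_of_ne (h : a ≠ b) :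
    ∃ n, (∀ k < n, a k = b k) ∧ a n ≠ b n := by
  classical
  have hne : ∃ n, a n ≠ b n := Function.ne_iff.mp h
  exact ⟨Nat.find hne, fun k hk => not_not.mp (Nat.find_min hne hk), Nat.find_spec hne⟩

theorem lexLe_or_lexLt (a b : ℕ → ℕ) : LexLe a b ∨ LexLt b a := by
  by_cases h : a = b
  · exact Or.inl (Or.inr h)
  obtain ⟨n, heq, hne⟩ := exists_forall_lt_eq_and_ne_of_ne h
  rcases lt_or_gt_of_ne hne with hlt | hgt
  · exact Or.inl (Or.inl ⟨n, heq, hlt⟩)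
  · exact Or.inr ⟨n, fun k hk => (heq k hk).symm, hgt⟩

theorem lexLt_irrefl (a : ℕ → ℕ) : ¬LexLt a a := fun ⟨_, _, h⟩ => lt_irrefl _ h

theorem lexLt_of_ne_of_le (h : a ≠ b) (hle : ∀ n, (∀ k < n, a k = b k) → a n ≤ b n) :
    LexLt a b := by
  obtain ⟨n, heq, hne⟩ := exists_forall_lt_eq_and_ne_of_ne h
  exact ⟨n, heq, lt_of_le_of_ne (hle n heq) hne⟩

end LexOrder

noncomputable def seqSum (q : ℝ) (b : ℕ → ℕ) (n : ℕ) : ℝ :=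
  ∑ i ∈ range n, (b i : ℝ) / q ^ (i + 1)

noncomputable def seqValue (q : ℝ) (b : ℕ → ℕ) : ℝ :=
  ∑' i, (b i : ℝ) / q ^ (i + 1)

theorem tendsto_div_pow_atTop_nhds_zero (C : ℝ) {q : ℝ} (hq : 1 < q) :
    Tendsto (fun n : ℕ => C / q ^ n) atTop (𝓝 0) := by
  simpa [div_eq_mul_inv] using
    (tendsto_inv_atTop_zero.comp (tendsto_pow_atTop_atTop_of_one_lt hq)).const_mul C

section SeqValue

variable {M : ℕ} {q : ℝ} {a b : ℕ → ℕ}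

theorem seqSum_succ (q : ℝ) (b : ℕ → ℕ) (n : ℕ) :
    seqSum q b (n + 1) = seqSum q b n + (b n : ℝ) / q ^ (n + 1) :=
  sum_range_succ _ n

theorem seqSum_congr {n : ℕ} (h : ∀ k < n, a k = b k) : seqSum q a n = seqSum q b n :=
  sum_congr rfl fun i hi => by rw [h i (mem_range.mp hi)]

theorem seqSum_add_le_of_lt (hq : 0 < q) {k : ℕ} (heq : ∀ i < k, a i = b i)
    (hlt : a k < b k) : seqSum q a (k + 1) + 1 / q ^ (k + 1) ≤ seqSum q b (k + 1) := by
  have hdigit : (a k : ℝ) + 1 ≤ b k := by exact_mod_cast hlt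
  rw [seqSum_succ, seqSum_succ, seqSum_congr heq, add_assoc, ← add_div]
  gcongr

theorem digit_div_pow_le (hq : 0 < q) (hb : ∀ i, b i ≤ M) (i : ℕ) :
    (b i : ℝ) / q ^ (i + 1) ≤ M / q * (1 / q) ^ i := by
  rw [div_mul_eq_mul_div, one_div_pow, mul_one_div, div_div, ← pow_succ]
  gcongr
  exact_mod_cast hb i

theorem summable_of_digits_le (hq : 1 < q) (hb : ∀ i, b i ≤ M) :
    Summable fun i => (b i : ℝ) / q ^ (i + 1) := by
  have hq0 : 0 < q := by linarith
  refine Summable.of_nonneg_of_le (fun i => by positivity) (digit_div_pow_le hq0 hb) ?_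
  exact (summable_geometric_of_lt_one (by positivity) ((div_lt_one hq0).mpr hq)).mul_left _

theorem seqValue_le (hq : 1 < q) (hb : ∀ i, b i ≤ M) : seqValue q b ≤ M / (q - 1) := by
  have hq0 : 0 < q := by linarith
  have hr : 1 / q < 1 := (div_lt_one hq0).mpr hq
  calc seqValue q b ≤ ∑' i : ℕ, M / q * (1 / q) ^ i :=
        (summable_of_digits_le hq hb).tsum_le_tsum (digit_div_pow_le hq0 hb)
          ((summable_geometric_of_lt_one (by positivity) hr).mul_left _)
    _ = M / (q - 1) := by
        rw [tsum_mul_left, tsum_geometric_of_lt_one (by positivity) hr]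
        field_simp

theorem seqValue_split (hq : 1 < q) (hb : ∀ i, b i ≤ M) (n : ℕ) :
    seqValue q b = seqSum q b n + seqValue q (fun i => b (n + i)) / q ^ n := by
  rw [seqValue, ← (summable_of_digits_le hq hb).sum_add_tsum_nat_add n, seqValue,
    ← tsum_div_const]
  congr 1
  refine tsum_congr fun i => ?_
  rw [div_div, ← pow_add, add_comm i n, add_comm (i + 1), add_assoc]

theorem seqSum_le_seqValue (hq : 1 < q) (ha : ∀ i, a i ≤ M) (n : ℕ) :
    seqSum q a n ≤ seqValue q a :=
  (summable_of_digits_le hq ha).sum_le_tsum _ fun i _ => by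
    have : 0 < q := by linarith
    positivity

theorem seqSum_lt_seqValue (hq : 1 < q) (hb : ∀ i, b i ≤ M)
    (hinf : {n | b n ≠ 0}.Infinite) (n : ℕ) : seqSum q b n < seqValue q b := by
  have hq0 : 0 < q := by linarith
  obtain ⟨m, hm, hnm⟩ := hinf.exists_gt n
  have htail : 0 < seqValue q (fun i => b (n + i)) := by
    refine (summable_of_digits_le hq fun i => hb (n + i)).tsum_pos (fun i => by positivity)
      (m - n) ?_
    rw [Nat.add_sub_cancel' hnm.le]
    have : 0 < b m := Nat.pos_of_ne_zero hm
    positivity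
  rw [seqValue_split hq hb n]
  have := div_pos htail (pow_pos hq0 n)
  linarith

theorem infinite_tail {c : ℕ → ℕ} (h : {m | c m ≠ 0}.Infinite) (k : ℕ) :
    {i | c (k + i) ≠ 0}.Infinite := by
  refine Set.infinite_of_forall_exists_gt fun N => ?_
  obtain ⟨m, hm, hlt⟩ := h.exists_gt (k + N)
  refine ⟨m - k, ?_, by omega⟩
  rw [Set.mem_ofPred_eq, Nat.add_sub_cancel' (by omega : k ≤ m)]
  exact hm

end SeqValue

section QuasiGreedy

variable {M : ℕ} {q x x' s : ℝ} {n : ℕ} {b : ℕ → ℕ}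

open Classical in
theorem qgDigit_le : qgDigit M q x s n ≤ M :=
  Nat.findGreatest_le M

open Classical in
theorem qgDigit_spec (hs : s < x) : s + (qgDigit M q x s n : ℝ) / q ^ (n + 1) < x :=
  Nat.findGreatest_spec (P := fun m : ℕ => s + (m : ℝ) / q ^ (n + 1) < x) (Nat.zero_le M)
    (by simpa using hs)

open Classical in
theorem le_qgDigit_add_one (h : qgDigit M q x s n < M) :
    x ≤ s + ((qgDigit M q x s n : ℝ) + 1) / q ^ (n + 1) := by
  by_contra! hc
  have : qgDigit M q x s n + 1 ≤ qgDigit M q x s n :=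
    Nat.le_findGreatest (P := fun m : ℕ => s + (m : ℝ) / q ^ (n + 1) < x) h (by push_cast; exact hc)
  omega

open Classical in
theorem qgDigit_eq (hq : 0 < q) {k : ℕ} (hkM : k ≤ M) (hk : s + (k : ℝ) / q ^ (n + 1) < x)
    (hmax : k < M → x ≤ s + ((k : ℝ) + 1) / q ^ (n + 1)) : qgDigit M q x s n = k := by
  refine Nat.findGreatest_eq_iff.mpr ⟨hkM, fun _ => hk, fun m hkm hmM hm => ?_⟩
  have : ((k : ℝ) + 1) / q ^ (n + 1) ≤ (m : ℝ) / q ^ (n + 1) := by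
    gcongr
    exact_mod_cast hkm
  linarith [hmax (hkm.trans_le hmM)]

open Classical in
theorem qgDigit_mono (hxx' : x ≤ x') : qgDigit M q x s n ≤ qgDigit M q x' s n :=
  Nat.findGreatest_mono (fun _ hm => hm.trans_le hxx') le_rfl

theorem quasiGreedy_le (n : ℕ) : quasiGreedy M q x n ≤ M :=
  qgDigit_le

theorem qgSum_succ :
    qgSum M q x (n + 1) = qgSum M q x n + (quasiGreedy M q x n : ℝ) / q ^ (n + 1) :=
  rfl

theorem qgSum_eq_seqSum (M : ℕ) (q x : ℝ) : qgSum M q x = seqSum q (quasiGreedy M q x) := by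
  funext n
  induction n with
  | zero => simp [qgSum, seqSum]
  | succ n ih => rw [qgSum_succ, ih, seqSum_succ]

theorem qgSum_lt (hx : 0 < x) (n : ℕ) : qgSum M q x n < x := by
  induction n with
  | zero => exact hx
  | succ n ih => exact qgDigit_spec ih

theorem le_qgSum_add_of_quasiGreedy_lt (h : quasiGreedy M q x n < M) :
    x ≤ qgSum M q x (n + 1) + 1 / q ^ (n + 1) := by
  rw [qgSum_succ, add_assoc, ← add_div]
  exact le_qgDigit_add_one h

theorem one_le_natCast_div_sub_one (hq1 : 1 < q) (hq2 : q ≤ M + 1) : 1 ≤ (M : ℝ) / (q - 1) := by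
  rw [le_div_iff₀ (by linarith)]
  linarith

/-- A step with a digit `< M` leaves a remainder `≤ 1 / q ^ (n + 1)`, within the bound since
`1 ≤ M / (q - 1)`; a step with the digit `M` shrinks the bound by exactly the factor `q`. -/
theorem sub_qgSum_le (hq1 : 1 < q) (hq2 : q ≤ M + 1) (hx : x ≤ M / (q - 1)) (n : ℕ) :
    x - qgSum M q x n ≤ M / (q - 1) / q ^ n := by
  have hq0 : 0 < q := by linarith
  have hC := one_le_natCast_div_sub_one hq1 hq2
  induction n with
  | zero => simpa [qgSum] using hx
  | succ n ih =>
    rcases (quasiGreedy_le (M := M) (q := q) (x := x) n).lt_or_eq with hlt | heq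
    · have : 1 / q ^ (n + 1) ≤ M / (q - 1) / q ^ (n + 1) := by gcongr
      linarith [le_qgSum_add_of_quasiGreedy_lt hlt]
    · have hstep : M / (q - 1) / q ^ n - M / q ^ (n + 1) = M / (q - 1) / q ^ (n + 1) := by
        field_simp [(sub_pos.mpr hq1).ne']
        ring
      rw [qgSum_succ, heq]
      linarith

theorem hasSum_quasiGreedy (hq1 : 1 < q) (hq2 : q ≤ M + 1) (hx0 : 0 < x)
    (hx : x ≤ M / (q - 1)) : HasSum (fun i => (quasiGreedy M q x i : ℝ) / q ^ (i + 1)) x := by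
  have hq0 : 0 < q := by linarith
  refine (hasSum_iff_tendsto_nat_of_nonneg (fun i => by positivity) x).mpr ?_
  have hlow : Tendsto (fun n => x - M / (q - 1) / q ^ n) atTop (𝓝 x) := by
    simpa using (tendsto_div_pow_atTop_nhds_zero (M / (q - 1)) hq1).const_sub x
  refine tendsto_of_tendsto_of_tendsto_of_le_of_le hlow tendsto_const_nhds (fun n => ?_)
    (fun n => ?_)
  · have := sub_qgSum_le hq1 hq2 hx n
    rw [qgSum_eq_seqSum] at this
    exact sub_le_comm.mp this
  · exact (congrFun (qgSum_eq_seqSum M q x) n ▸ qgSum_lt hx0 n).le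

theorem seqValue_quasiGreedy (hq1 : 1 < q) (hq2 : q ≤ M + 1) (hx0 : 0 < x)
    (hx : x ≤ M / (q - 1)) : seqValue q (quasiGreedy M q x) = x :=
  (hasSum_quasiGreedy hq1 hq2 hx0 hx).tsum_eq

/-- A finitely supported expansion would sum to one of the partial sums, which stay below `x`. -/
theorem quasiGreedy_infinite (hq1 : 1 < q) (hq2 : q ≤ M + 1) (hx0 : 0 < x)
    (hx : x ≤ M / (q - 1)) : {n | quasiGreedy M q x n ≠ 0}.Infinite := by
  intro hfin
  obtain ⟨N, hN⟩ := hfin.bddAbove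
  have hzero : ∀ i ∉ range (N + 1), (quasiGreedy M q x i : ℝ) / q ^ (i + 1) = 0 := by
    intro i hi
    have : quasiGreedy M q x i = 0 := by
      by_contra h
      exact hi (mem_range.mpr (Nat.lt_succ_of_le (hN h)))
    simp [this]
  have hsum := (hasSum_quasiGreedy hq1 hq2 hx0 hx).unique (hasSum_sum_of_ne_finset_zero hzero)
  have := qgSum_lt (M := M) (q := q) hx0 (N + 1)
  rw [qgSum_eq_seqSum] at this
  exact this.ne hsum.symm

theorem quasiGreedy_eq_of (hq : 0 < q) (hb : ∀ i, b i ≤ M) (hlt : ∀ n, seqSum q b n < x)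
    (hmax : ∀ n, b n < M → x ≤ seqSum q b (n + 1) + 1 / q ^ (n + 1)) :
    quasiGreedy M q x = b := by
  have hdigit : ∀ n, qgSum M q x n = seqSum q b n → quasiGreedy M q x n = b n := by
    intro n hs
    rw [quasiGreedy, hs]
    refine qgDigit_eq hq (hb n) (seqSum_succ q b n ▸ hlt (n + 1)) fun h => ?_
    rw [add_div, ← add_assoc, ← seqSum_succ]
    exact hmax n h
  have hsum : ∀ n, qgSum M q x n = seqSum q b n := by
    intro n
    induction n with
    | zero => simp [qgSum, seqSum]
    | succ n ih => rw [qgSum_succ, ih, hdigit n ih, seqSum_succ]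
  exact funext fun n => hdigit n (hsum n)

theorem lexLt_quasiGreedy (hq1 : 1 < q) (hq2 : q ≤ M + 1) (hx0 : 0 < x) (hxx' : x < x')
    (hx' : x' ≤ M / (q - 1)) : LexLt (quasiGreedy M q x) (quasiGreedy M q x') := by
  have hne : quasiGreedy M q x ≠ quasiGreedy M q x' := fun h => hxx'.ne <| by
    rw [← seqValue_quasiGreedy hq1 hq2 hx0 (hxx'.le.trans hx'),
      ← seqValue_quasiGreedy hq1 hq2 (hx0.trans hxx') hx', h]
  refine lexLt_of_ne_of_le hne fun n heq => ?_
  have hsum : qgSum M q x n = qgSum M q x' n := by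
    rw [qgSum_eq_seqSum, qgSum_eq_seqSum, seqSum_congr heq]
  rw [quasiGreedy, quasiGreedy, hsum]
  exact qgDigit_mono hxx'.le

theorem lexLe_quasiGreedy_of_seqValue_le (hq : 1 < q) (hb : ∀ i, b i ≤ M)
    (hinf : {n | b n ≠ 0}.Infinite) (hV : seqValue q b ≤ x) : LexLe b (quasiGreedy M q x) := by
  refine (lexLe_or_lexLt b _).resolve_right fun ⟨k, heq, hlt⟩ => ?_
  have h1 := le_qgSum_add_of_quasiGreedy_lt (hlt.trans_le (hb k))
  rw [qgSum_eq_seqSum] at h1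
  have h2 := seqSum_add_le_of_lt (zero_lt_one.trans hq) heq hlt
  linarith [seqSum_lt_seqValue hq hb hinf (k + 1)]

theorem seqValue_tail_quasiGreedy_le_one (hq1 : 1 < q) (hq2 : q ≤ M + 1) (hx0 : 0 < x)
    (hx : x ≤ M / (q - 1)) (h : quasiGreedy M q x n < M) :
    seqValue q (fun i => quasiGreedy M q x (n + 1 + i)) ≤ 1 := by
  have hq0 : 0 < q := by linarith
  have hsplit := seqValue_split hq1 (quasiGreedy_le (M := M) (q := q) (x := x)) (n + 1)
  rw [seqValue_quasiGreedy hq1 hq2 hx0 hx] at hsplit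
  have hmax := le_qgSum_add_of_quasiGreedy_lt h
  rw [qgSum_eq_seqSum] at hmax
  refine (div_le_div_iff_of_pos_right (pow_pos hq0 (n + 1))).mp ?_
  linarith

end QuasiGreedy

section Admissible

variable {M : ℕ} {q : ℝ} {a α : ℕ → ℕ}

theorem seqValue_le_of_lexLt (hq : 1 < q) (ha : ∀ i, a i ≤ M) {k : ℕ}
    (heq : ∀ i < k, a i = α i) (hlt : a k < α k) :
    seqValue q a ≤
      seqSum q α (k + 1) + (seqValue q (fun i => a (k + 1 + i)) - 1) / q ^ (k + 1) := by
  have := seqSum_add_le_of_lt (zero_lt_one.trans hq) heq hlt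
  rw [seqValue_split hq ha (k + 1), sub_div]
  linarith

/-- Iterating `seqValue_le_of_lexLt` along tails: the error term `M / (q - 1)` of the trivial
bound shrinks by a factor `q` at each step. -/
theorem seqValue_tail_le_one_add (hq : 1 < q) (hα : ∀ i, α i ≤ M) (hαv : seqValue q α ≤ 1)
    (ha : ∀ i, a i ≤ M) (hadm : ∀ n, a n < M → LexLe (fun i => a (n + 1 + i)) α) (m : ℕ) :
    ∀ n, a n < M → seqValue q (fun i => a (n + 1 + i)) ≤ 1 + M / (q - 1) / q ^ m := by
  induction m with
  | zero =>
    intro n _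
    rw [pow_zero, div_one]
    linarith [seqValue_le hq fun i => ha (n + 1 + i)]
  | succ m ih =>
    intro n hn
    rcases hadm n hn with ⟨k, heq, hlt⟩ | h
    · have hfirst := seqValue_le_of_lexLt hq (fun i => ha (n + 1 + i)) heq hlt
      have htail : (fun i => a (n + 1 + (k + 1 + i))) = fun i => a (n + 1 + k + 1 + i) := by
        funext i
        rw [← add_assoc, ← add_assoc]
      rw [htail] at hfirst
      have hnext := ih (n + 1 + k) (hlt.trans_le (hα k))
      have hshrink : M / (q - 1) / q ^ m / q ^ (k + 1) ≤ M / (q - 1) / q ^ (m + 1) := by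
        rw [div_div, ← pow_add]
        gcongr
        · exact hq.le
        · omega
      have hdiv : (seqValue q (fun i => a (n + 1 + k + 1 + i)) - 1) / q ^ (k + 1)
          ≤ M / (q - 1) / q ^ m / q ^ (k + 1) := by
        gcongr
        linarith
      linarith [seqSum_le_seqValue hq hα (k + 1)]
    · rw [h]
      have : 0 ≤ M / (q - 1) / q ^ (m + 1) := by positivity
      linarith

theorem seqValue_tail_le_one (hq : 1 < q) (hα : ∀ i, α i ≤ M) (hαv : seqValue q α ≤ 1)
    (ha : ∀ i, a i ≤ M) (hadm : ∀ n, a n < M → LexLe (fun i => a (n + 1 + i)) α) {n : ℕ}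
    (hn : a n < M) : seqValue q (fun i => a (n + 1 + i)) ≤ 1 :=
  ge_of_tendsto (by simpa using (tendsto_div_pow_atTop_nhds_zero (M / (q - 1)) hq).const_add 1)
    (Eventually.of_forall fun m => seqValue_tail_le_one_add hq hα hαv ha hadm m n hn)

theorem quasiGreedy_seqValue (hq1 : 1 < q) (hq2 : q ≤ M + 1) (ha : ∀ i, a i ≤ M)
    (hinf : {n | a n ≠ 0}.Infinite)
    (hadm : ∀ n, a n < M → LexLe (fun i => a (n + 1 + i)) (quasiGreedy M q 1)) :
    quasiGreedy M q (seqValue q a) = a := by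
  have hq0 : 0 < q := by linarith
  have hαv : seqValue q (quasiGreedy M q 1) = 1 :=
    seqValue_quasiGreedy hq1 hq2 one_pos (one_le_natCast_div_sub_one hq1 hq2)
  refine quasiGreedy_eq_of hq0 ha (seqSum_lt_seqValue hq1 ha hinf) fun n hn => ?_
  have := seqValue_tail_le_one hq1 (fun _ => quasiGreedy_le _) hαv.le ha hadm hn
  rw [seqValue_split hq1 ha (n + 1)]
  gcongr

end Admissible

theorem quasiGreedy_bijection_general (M : ℕ) (q : ℝ) (hq1 : 1 < q)
    (hq2 : q ≤ (M : ℝ) + 1) :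
    (∀ x x' : ℝ, 0 < x → x < x' → x' ≤ (M : ℝ) / (q - 1) →
      LexLt (quasiGreedy M q x) (quasiGreedy M q x')) ∧
    Set.BijOn (fun x : ℝ => quasiGreedy M q x) (Set.Ioc 0 ((M : ℝ) / (q - 1)))
      {a : ℕ → ℕ | (∀ i, a i ≤ M) ∧ {n | a n ≠ 0}.Infinite ∧
        ∀ n, a n < M → LexLe (fun i => a (n + 1 + i)) (quasiGreedy M q 1)} := by
  have hmono : ∀ x x' : ℝ, 0 < x → x < x' → x' ≤ (M : ℝ) / (q - 1) →
      LexLt (quasiGreedy M q x) (quasiGreedy M q x') :=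
    fun _ _ hx0 hxx' hx' => lexLt_quasiGreedy hq1 hq2 hx0 hxx' hx'
  refine ⟨hmono, ?_, ?_, ?_⟩
  · rintro x ⟨hx0, hx⟩
    have hinf := quasiGreedy_infinite hq1 hq2 hx0 hx
    exact ⟨quasiGreedy_le, hinf, fun n hn =>
      lexLe_quasiGreedy_of_seqValue_le hq1 (fun _ => quasiGreedy_le _) (infinite_tail hinf (n + 1))
        (seqValue_tail_quasiGreedy_le_one hq1 hq2 hx0 hx hn)⟩
  · intro x hx x' hx' (h : quasiGreedy M q x = quasiGreedy M q x')
    by_contra hne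
    rcases lt_or_gt_of_ne hne with hlt | hlt
    · exact lexLt_irrefl _ (h ▸ hmono x x' hx.1 hlt hx'.2)
    · exact lexLt_irrefl _ (h ▸ hmono x' x hx'.1 hlt hx.2)
  · rintro a ⟨ha, hinf, hadm⟩
    refine ⟨seqValue q a, ⟨?_, seqValue_le hq1 ha⟩, quasiGreedy_seqValue hq1 hq2 ha hinf hadm⟩
    simpa [seqSum] using seqSum_lt_seqValue hq1 ha hinf 0

/-- Theorem 2.2 (b): for fixed `q ∈ (1, M+1]`, the map `x ↦ (a_i)`, the quasi-greedy
expansion of `x`, is a strictly increasing one-to-one correspondence between `(0, M/(q-1)]`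
and the set of infinite sequences with digits in `{0,…,M}` satisfying
`a_{n+1}a_{n+2}… ≤ α_1α_2…` whenever `a_n < M`, where `(α_i)` is the quasi-greedy
expansion of `1`. -/
theorem quasiGreedy_bijection (M : ℕ) (hM : 0 < M) (q : ℝ) (hq1 : 1 < q)
    (hq2 : q ≤ (M : ℝ) + 1) :
    (∀ x x' : ℝ, 0 < x → x < x' → x' ≤ (M : ℝ) / (q - 1) →
      LexLt (quasiGreedy M q x) (quasiGreedy M q x')) ∧
    Set.BijOn (fun x : ℝ => quasiGreedy M q x) (Set.Ioc 0 ((M : ℝ) / (q - 1)))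
      {a : ℕ → ℕ | (∀ i, a i ≤ M) ∧ {n | a n ≠ 0}.Infinite ∧
        ∀ n, a n < M → LexLe (fun i => a (n + 1 + i)) (quasiGreedy M q 1)} :=
  quasiGreedy_bijection_general M q hq1 hq2
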